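/- arXiv:1508.01360 — 2 statements merged into one kernel-verified Lean document; each statement's English description precedes it below -/
import Mathlib

section
/- For any integers 0 < m_1 < … < m_t, the number f_n of codewords of length n in the multi-delimiter code D_{m_1,…,m_t} satisfies, for every n ≥ 1, the recurrence f_n = T_n + ∑_{k=0}^{n−2} (2 − T_{n−k}) f_k, where f_0 = 0 and T_j denotes the number of elements of the multiset {m_1+1, m_1+2, …, m_t+1, m_t+2} equal to j (so T_j ∈ {0,1,2}). -/
/-- The word `1^mi 0`. -/
def shortWord (mi : ℕ) : List Bool := List.replicate mi true ++ [false]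

/-- The delimiter `0 1^mi 0`. -/
def delim (mi : ℕ) : List Bool := false :: (List.replicate mi true ++ [false])

/-- The multi-delimiter code `D_{m_1,…,m_t}`. -/
def MultiDelim {t : ℕ} (m : Fin t → ℕ) : Set (List Bool) :=
  {w | (∃ i, w = shortWord (m i)) ∨
    ((∀ i, ¬ shortWord (m i) <+: w) ∧
     (∃ i, delim (m i) <:+ w) ∧
     (∀ i u v, w = u ++ delim (m i) ++ v → v = []))}

/-- `fD m n` is the number of codewords of `D_{m_1,…,m_t}` of length `n`. -/
noncomputable def fD {t : ℕ} (m : Fin t → ℕ) (n : ℕ) : ℕ :=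
  Set.ncard {w ∈ MultiDelim m | w.length = n}

/-- `TD m j` is the number of elements of the multiset
`{m_1+1, m_1+2, …, m_t+1, m_t+2}` equal to `j`. -/
def TD {t : ℕ} (m : Fin t → ℕ) (j : ℕ) : ℕ :=
  (Finset.univ.filter fun i => m i + 1 = j).card +
  (Finset.univ.filter fun i => m i + 2 = j).card

/-!
Peeling off the first run of ones, a codeword is either a short word `1^{m_i} 0`
or `1^a 0 w'` with `a ∉ {m_1, …, m_t}` and `w'` again a codeword. With `s_j` the
number of `i` such that `m_i + 1 = j` (so `s_j ≤ 1`, and `s_{a+1} = 1` iff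
`a ∈ {m_1, …, m_t}`), counting by the length of `w'` gives
`f_n = s_n + ∑_{k<n} (1 - s_{n-k}) f_k`. Since `s_1 = 0`, the term `k = n - 1` is
`f_{n-1}`; expanding it by the same identity and using `T_j = s_j + s_{j-1}`
yields the recurrence.
-/

namespace List

variable {α : Type*} {x y : α}

theorem replicate_append_cons_inj (hxy : x ≠ y) {a b : ℕ} {l l' : List α}
    (h : replicate a x ++ y :: l = replicate b x ++ y :: l') : a = b ∧ l = l' := by
  induction a generalizing b with
  | zero => cases b <;> simp_all [replicate_succ, eq_comm]
  | succ a ih =>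
    cases b with
    | zero => simp [replicate_succ, hxy] at h
    | succ b => simpa using ih (by simpa [replicate_succ] using h)

theorem exists_eq_replicate_true_append_false_cons {w : List Bool} (h : false ∈ w) :
    ∃ a w', w = replicate a true ++ false :: w' := by
  induction w with
  | nil => simp at h
  | cons c w ih =>
    cases c with
    | false => exact ⟨0, w, rfl⟩
    | true =>
      obtain ⟨a, w', rfl⟩ := ih (by simpa using h)
      exact ⟨a + 1, w', rfl⟩

theorem exists_eq_replicate_append_of_append_cons (hxy : x ≠ y) {a : ℕ} {l u r : List α}
    (h : replicate a x ++ y :: l = u ++ y :: r) :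
    ∃ u', u = replicate a x ++ u' ∧ y :: l = u' ++ y :: r := by
  induction a generalizing u with
  | zero => exact ⟨u, rfl, h⟩
  | succ a ih =>
    cases u with
    | nil => simp [replicate_succ, hxy] at h
    | cons c u =>
      simp only [replicate_succ, cons_append, cons.injEq] at h
      obtain ⟨rfl, h⟩ := h
      obtain ⟨u', rfl, h'⟩ := ih h
      exact ⟨u', rfl, h'⟩

end List

open List in
theorem count_false_shortWord (k : ℕ) : (shortWord k).count false = 1 := by
  simp [shortWord, count_replicate]

open List in
theorem count_false_delim (k : ℕ) : (delim k).count false = 2 := by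
  simp [delim, count_replicate]

namespace MultiDelim

open List

variable {t : ℕ} {m : Fin t → ℕ} {w : List Bool}

theorem eq_nil_of_eq_append_delim (hw : w ∈ MultiDelim m) (j : Fin t) {u v : List Bool}
    (h : w = u ++ delim (m j) ++ v) : v = [] := by
  rcases hw with ⟨i, rfl⟩ | ⟨-, -, hocc⟩
  · have := congrArg (count false) h
    simp only [count_append, count_false_shortWord, count_false_delim] at this
    omega
  · exact hocc j u v h

theorem eq_of_shortWord_prefix (hw : w ∈ MultiDelim m) (j : Fin t)
    (h : shortWord (m j) <+: w) : w = shortWord (m j) := by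
  obtain ⟨v, rfl⟩ := h
  rcases hw with ⟨i, hi⟩ | ⟨hpre, -, -⟩
  · simp only [shortWord, append_assoc, singleton_append] at hi
    simp [(replicate_append_cons_inj (by decide) hi).2]
  · exact absurd ⟨v, rfl⟩ (hpre j)

theorem exists_delim_suffix_cons (hw : w ∈ MultiDelim m) : ∃ i, delim (m i) <:+ false :: w := by
  rcases hw with ⟨i, rfl⟩ | ⟨-, ⟨i, hi⟩, -⟩
  · exact ⟨i, suffix_refl _⟩
  · exact ⟨i, hi.trans (suffix_cons _ _)⟩

theorem replicate_append_false_cons_mem {a : ℕ} (ha : a ∉ Set.range m)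
    (hw : w ∈ MultiDelim m) : replicate a true ++ false :: w ∈ MultiDelim m := by
  refine Or.inr ⟨?_, ?_, ?_⟩
  · rintro j ⟨v, hv⟩
    simp only [shortWord, append_assoc, singleton_append] at hv
    exact ha ⟨j, (replicate_append_cons_inj (by decide) hv).1⟩
  · obtain ⟨i, hi⟩ := exists_delim_suffix_cons hw
    exact ⟨i, hi.trans (suffix_append _ _)⟩
  · intro j u v h
    rw [append_assoc, delim, cons_append] at h
    obtain ⟨u', -, h'⟩ := exists_eq_replicate_append_of_append_cons (by decide) h
    cases u' with
    | nil =>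
      have hwv : w = shortWord (m j) ++ v := by simpa [shortWord] using h'
      have := eq_of_shortWord_prefix hw j ⟨v, hwv.symm⟩
      rw [hwv] at this
      simpa using this
    | cons c u'' =>
      simp only [cons_append, cons.injEq] at h'
      exact eq_nil_of_eq_append_delim hw j (u := u'') (by rw [h'.2, delim]; simp)

theorem exists_eq_replicate_append_false_cons (hw : w ∈ MultiDelim m)
    (hshort : ∀ i, w ≠ shortWord (m i)) :
    ∃ a ∉ Set.range m, ∃ w' ∈ MultiDelim m, w = replicate a true ++ false :: w' := by
  obtain ⟨hpre, ⟨i, x, hx⟩, -⟩ := hw.resolve_left (by simpa [eq_comm] using hshort)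
  obtain ⟨a, w', rfl⟩ := exists_eq_replicate_true_append_false_cons (w := w)
    (by simp [← hx, delim])
  have ha : a ∉ Set.range m := by
    rintro ⟨j, rfl⟩
    exact hpre j ⟨w', by simp [shortWord]⟩
  refine ⟨a, ha, w', ?_, rfl⟩
  by_cases hs : ∃ j, w' = shortWord (m j)
  · exact Or.inl hs
  push Not at hs
  refine Or.inr ⟨?_, ?_, fun j u v h => ?_⟩
  · rintro j ⟨y, rfl⟩
    have : y = [] :=
      eq_nil_of_eq_append_delim hw j (u := replicate a true) (by simp [shortWord, delim])
    exact hs j (by simp [this])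
  · rw [delim] at hx
    obtain ⟨u', -, h⟩ := exists_eq_replicate_append_of_append_cons (by decide) hx.symm
    cases u' with
    | nil => exact absurd (by simpa [shortWord] using h) (hs i)
    | cons c u'' =>
      simp only [cons_append, cons.injEq] at h
      exact ⟨i, u'', by rw [h.2, delim]⟩
  · exact eq_nil_of_eq_append_delim hw j (u := replicate a true ++ false :: u) (by rw [h]; simp)

theorem mem_iff : w ∈ MultiDelim m ↔ (∃ i, w = shortWord (m i)) ∨
    ∃ a ∉ Set.range m, ∃ w' ∈ MultiDelim m, w = replicate a true ++ false :: w' := by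
  constructor
  · intro hw
    by_cases hs : ∃ i, w = shortWord (m i)
    · exact Or.inl hs
    · exact Or.inr (exists_eq_replicate_append_false_cons hw (by simpa using hs))
  · rintro (hs | ⟨a, ha, w', hw', rfl⟩)
    · exact Or.inl hs
    · exact replicate_append_false_cons_mem ha hw'

theorem ne_nil (hw : w ∈ MultiDelim m) : w ≠ [] := by
  rcases mem_iff.mp hw with ⟨i, rfl⟩ | ⟨a, -, w', -, rfl⟩ <;> simp [shortWord]

end MultiDelim

open Finset

section Counting

variable {t : ℕ} (m : Fin t → ℕ)

noncomputable def codewords (n : ℕ) : Finset (List Bool) :=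
  Set.Finite.toFinset (s := {w | w ∈ MultiDelim m ∧ w.length = n})
    ((List.finite_length_eq Bool n).subset fun _ hw => hw.2)

variable {m}

theorem mem_codewords {n : ℕ} {w : List Bool} :
    w ∈ codewords m n ↔ w ∈ MultiDelim m ∧ w.length = n :=
  Set.Finite.mem_toFinset _

theorem card_codewords (n : ℕ) : (codewords m n).card = fD m n :=
  (Set.ncard_eq_toFinset_card _ _).symm

theorem fD_zero : fD m 0 = 0 := by
  rw [← card_codewords, card_eq_zero, eq_empty_iff_forall_notMem]
  intro w hw
  rw [mem_codewords, List.length_eq_zero_iff] at hw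
  exact MultiDelim.ne_nil hw.1 hw.2

theorem codewords_succ (k : ℕ) :
    codewords m (k + 1) = (if k ∈ univ.image m then {shortWord k} else ∅) ∪
      ((range (k + 1)).filter fun j => k - j ∉ univ.image m).biUnion
        fun j => (codewords m j).image (List.replicate (k - j) true ++ false :: ·) := by
  ext w
  simp only [mem_union, mem_biUnion, mem_image, mem_filter, mem_range, mem_codewords, mem_univ,
    true_and]
  constructor
  · rintro ⟨hw, hlen⟩
    rcases MultiDelim.mem_iff.mp hw with ⟨i, rfl⟩ | ⟨a, ha, w', hw', rfl⟩
    · have hk : m i = k := by simpa [shortWord] using hlen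
      left
      rw [if_pos ⟨i, hk⟩, hk, mem_singleton]
    · have hk : a + w'.length = k := by simp at hlen; omega
      right
      refine ⟨w'.length, ⟨by omega, ?_⟩, w', ⟨hw', rfl⟩, ?_⟩ <;>
        rw [show k - w'.length = a by omega]
      simpa using ha
  · rintro (hw | ⟨j, ⟨hj, hM⟩, w', ⟨hw', rfl⟩, rfl⟩)
    · split_ifs at hw with hM
      · obtain ⟨i, rfl⟩ := hM
        rw [mem_singleton.mp hw]
        exact ⟨MultiDelim.mem_iff.mpr (Or.inl ⟨i, rfl⟩), by simp [shortWord]⟩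
      · simp at hw
    · refine ⟨MultiDelim.replicate_append_false_cons_mem ?_ hw', by simp; omega⟩
      simpa using hM

theorem fD_succ (k : ℕ) :
    fD m (k + 1) = (if k ∈ univ.image m then 1 else 0) +
      ∑ j ∈ (range (k + 1)).filter (fun j => k - j ∉ univ.image m), fD m j := by
  rw [← card_codewords, codewords_succ, card_union_of_disjoint, card_biUnion]
  · congr 1
    · split_ifs <;> rfl
    · refine sum_congr rfl fun j _ => ?_
      rw [card_image_of_injective _ fun u v h => List.cons_injective (List.append_cancel_left h),
        card_codewords]
  · intro i _ j _ hij
    refine disjoint_left.mpr fun w hi hj => hij ?_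
    obtain ⟨u, hu, rfl⟩ := mem_image.mp hi
    obtain ⟨v, hv, huv⟩ := mem_image.mp hj
    rw [← (mem_codewords.mp hu).2, ← (mem_codewords.mp hv).2,
      (List.replicate_append_cons_inj (by decide) huv).2]
  · refine disjoint_left.mpr fun w hs hw => ?_
    split_ifs at hs with hk
    · obtain ⟨j, hj, hw⟩ := mem_biUnion.mp hw
      obtain ⟨u, -, rfl⟩ := mem_image.mp hw
      have hkj := (List.replicate_append_cons_inj (by decide) (mem_singleton.mp hs)).1
      exact (mem_filter.mp hj).2 (by rwa [hkj])
    · simp at hs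

end Counting

section Recurrence

variable {t : ℕ}

def shortCount (m : Fin t → ℕ) (j : ℕ) : ℕ := #{i | m i + 1 = j}

variable {m : Fin t → ℕ}

theorem shortCount_zero : shortCount m 0 = 0 := by
  simp [shortCount]

theorem shortCount_one (hpos : ∀ i, 0 < m i) : shortCount m 1 = 0 := by
  simp [shortCount, (hpos _).ne']

theorem shortCount_succ (hinj : Function.Injective m) (k : ℕ) :
    shortCount m (k + 1) = if k ∈ univ.image m then 1 else 0 := by
  simp only [shortCount, add_left_inj]
  split_ifs with hk
  · obtain ⟨i, -, rfl⟩ := mem_image.mp hk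
    exact card_eq_one.mpr ⟨i, by ext j; simp [hinj.eq_iff]⟩
  · exact card_eq_zero.mpr
      (filter_eq_empty_iff.mpr fun i _ hi => hk (hi ▸ mem_image_of_mem m (mem_univ i)))

theorem shortCount_le_one (hinj : Function.Injective m) (j : ℕ) : shortCount m j ≤ 1 := by
  cases j with
  | zero => simp [shortCount_zero]
  | succ k => rw [shortCount_succ hinj]; split_ifs <;> simp

theorem TD_succ (j : ℕ) : TD m (j + 1) = shortCount m (j + 1) + shortCount m j := by
  unfold TD shortCount
  congr 2
  exact filter_congr fun i _ => by omega

theorem TD_le_two (hinj : Function.Injective m) (j : ℕ) : TD m j ≤ 2 := by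
  cases j with
  | zero => simp [TD]
  | succ k =>
    linarith [TD_succ (m := m) k, shortCount_le_one hinj (k + 1), shortCount_le_one hinj k]

theorem fD_eq_shortCount_add_sum (hinj : Function.Injective m) (n : ℕ) :
    (fD m n : ℤ) =
      shortCount m n + ∑ j ∈ range n, (1 - (shortCount m (n - j) : ℤ)) * fD m j := by
  cases n with
  | zero => simp [fD_zero, shortCount_zero]
  | succ k =>
    rw [fD_succ, sum_filter, shortCount_succ hinj]
    push_cast
    congr 1
    refine sum_congr rfl fun j hj => ?_
    rw [show k + 1 - j = k - j + 1 by have := mem_range.mp hj; omega, shortCount_succ hinj]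
    split_ifs <;> simp

end Recurrence

theorem multiDelim_count_recurrence_general {t : ℕ} (m : Fin t → ℕ)
    (hpos : ∀ i, 0 < m i) (hmono : StrictMono m) (n : ℕ) (hn : 1 ≤ n) :
    fD m n = TD m n + ∑ k ∈ Finset.range (n - 1), (2 - TD m (n - k)) * fD m k := by
  have hinj := hmono.injective
  obtain ⟨p, rfl⟩ := Nat.exists_eq_add_of_le' hn
  have hsplit : ∑ k ∈ range p, ((2 : ℤ) - TD m (p + 1 - k)) * fD m k =
      ∑ k ∈ range p, (1 - (shortCount m (p + 1 - k) : ℤ)) * fD m k +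
        ∑ k ∈ range p, (1 - (shortCount m (p - k) : ℤ)) * fD m k := by
    rw [← sum_add_distrib]
    refine sum_congr rfl fun k hk => ?_
    rw [show p + 1 - k = p - k + 1 by have := mem_range.mp hk; omega, TD_succ]
    push_cast
    ring
  have hnext := fD_eq_shortCount_add_sum hinj (p + 1)
  rw [sum_range_succ, Nat.add_sub_cancel_left, shortCount_one hpos] at hnext
  have hprev := fD_eq_shortCount_add_sum hinj p
  zify [TD_le_two hinj]
  rw [Nat.add_sub_cancel, hsplit, TD_succ]
  push_cast
  linear_combination hnext + hprev

/-- for `0 < m_1 < … < m_t` the codeword counts `f_n` of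
`D_{m_1,…,m_t}` satisfy, for every `n ≥ 1`,
`f_n = T_n + ∑_{k=0}^{n-2} (2 - T_{n-k}) f_k`. -/
theorem multiDelim_count_recurrence {t : ℕ} (ht : 0 < t) (m : Fin t → ℕ)
    (hpos : ∀ i, 0 < m i) (hmono : StrictMono m) (n : ℕ) (hn : 1 ≤ n) :
    fD m n = TD m n + ∑ k ∈ Finset.range (n - 1), (2 - TD m (n - k)) * fD m k :=
  multiDelim_count_recurrence_general m hpos hmono n hn
end

section
/- (Generating function of D_2.) Let s_n be the number of codewords of the code D_2 of length at most n. For every real z with |z| < 1/2, the series ∑_{n=0}^∞ s_n z^n converges and (1 − 2z + z³ − z⁴) · ∑_{n=0}^∞ s_n z^n = z³. -/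
/-!
`D₂` is the union of `{110}` with the intersection of two regular languages: words not beginning
with `110`, and words whose first occurrence of `0110` is a suffix. A product of a prefix automaton
and a Knuth–Morris–Pratt automaton for `0110` recognizes it. The number `c q n` of words of
length `n` accepted from a state `q` satisfies `c q (n + 1) = c (δ q 0) n + c (δ q 1) n`, so a
linear recurrence checked by computation for small lengths at *every* state propagates to all
lengths. This gives `f (n + 5) + f (n + 2) = 2 f (n + 4) + f (n + 1)`, hence
`s (n + 4) + s (n + 1) = 2 s (n + 3) + s n` with `s₀, …, s₃ = 0, 0, 0, 1`, which is the claimed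
identity of power series; the series converges for `|z| < 1/2` because `s n ≤ 2 ^ (n + 1)`.
-/

/-- The code `D₂`: the word `110` together with all binary words that do not begin
with `110`, end with the suffix `0110`, and contain `0110` only as that suffix. -/
def D2 : Set (List Bool) :=
  {w | w = [true, true, false] ∨
    (¬ [true, true, false] <+: w ∧
     [false, true, true, false] <:+ w ∧
     ∀ u v, w = u ++ [false, true, true, false] ++ v → v = [])}

/-- `f2 n` is the number of codewords of `D₂` of length `n`. -/
noncomputable def f2 (n : ℕ) : ℕ := Set.ncard {w ∈ D2 | w.length = n}

/-- `s2 n` is the number of codewords of `D₂` of length at most `n`. -/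
noncomputable def s2 (n : ℕ) : ℕ := ∑ i ∈ Finset.Icc 1 n, f2 i

open Finset

theorem List.forall_eq_append_append_imp_eq_nil_iff {α : Type*} {l w : List α} (hl : l ≠ []) :
    (∀ u v, w = u ++ l ++ v → v = []) ↔ ¬ l <:+: w.dropLast := by
  constructor
  · rintro h ⟨u, v, huv⟩
    obtain rfl | ⟨w', a, rfl⟩ := w.eq_nil_or_concat
    · simp_all
    · rw [List.concat_eq_append, List.dropLast_concat] at huv
      simpa using h u (v ++ [a]) (by rw [List.concat_eq_append, ← huv]; simp)
  · rintro h u v rfl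
    obtain rfl | ⟨v', a, rfl⟩ := v.eq_nil_or_concat
    · rfl
    · exact absurd ⟨u, v', by simp⟩ h

namespace DFA

variable {σ : Type*} (M : DFA Bool σ) [DecidablePred (· ∈ M.accept)]

def countFrom : σ → ℕ → ℕ
  | s, 0 => if s ∈ M.accept then 1 else 0
  | s, n + 1 => countFrom (M.step s false) n + countFrom (M.step s true) n

theorem ncard_evalFrom_mem_accept_length (s : σ) (n : ℕ) :
    {w | M.evalFrom s w ∈ M.accept ∧ w.length = n}.ncard = M.countFrom s n := by
  induction n generalizing s with
  | zero =>
    have h0 : {w | M.evalFrom s w ∈ M.accept ∧ w.length = 0} = {w | w = [] ∧ s ∈ M.accept} := by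
      ext (_ | _) <;> simp [evalFrom_nil]
    rw [h0]
    by_cases hs : s ∈ M.accept <;> simp [hs, countFrom]
  | succ n ih =>
    set A : Bool → Set (List Bool) :=
      fun b => {w | M.evalFrom (M.step s b) w ∈ M.accept ∧ w.length = n}
    have hsplit : {w | M.evalFrom s w ∈ M.accept ∧ w.length = n + 1} =
        List.cons false '' A false ∪ List.cons true '' A true := by
      ext (_ | ⟨b, w⟩)
      · simp
      · cases b <;> simp [A, evalFrom_cons]
    have hfin (b : Bool) : (A b).Finite := (List.finite_length_eq Bool n).subset fun _ hw => hw.2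
    have hdisj : Disjoint (List.cons false '' A false) (List.cons true '' A true) :=
      Set.disjoint_left.mpr (by rintro _ ⟨_, -, rfl⟩ ⟨_, -, h⟩; simp at h)
    rw [hsplit, Set.ncard_union_eq hdisj ((hfin false).image _) ((hfin true).image _),
      Set.ncard_image_of_injective _ List.cons_injective,
      Set.ncard_image_of_injective _ List.cons_injective, ih, ih, countFrom]

theorem countFrom_le_two_pow (s : σ) (n : ℕ) : M.countFrom s n ≤ 2 ^ n := by
  induction n generalizing s with
  | zero => simp only [countFrom]; split_ifs <;> simp
  | succ n ih =>
    rw [countFrom, pow_succ]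
    linarith [ih (M.step s false), ih (M.step s true)]

theorem countFrom_add_sum_eq_of_forall (l₁ l₂ : List ℕ)
    (h : ∀ s, (l₁.map (M.countFrom s)).sum = (l₂.map (M.countFrom s)).sum) (n : ℕ) (s : σ) :
    (l₁.map fun i => M.countFrom s (n + i)).sum = (l₂.map fun i => M.countFrom s (n + i)).sum := by
  induction n generalizing s with
  | zero => simpa using h s
  | succ n ih => simp only [Nat.add_right_comm n 1, countFrom, List.sum_map_add, ih]

end DFA

theorem summable_natCast_mul_pow_of_le_two_pow {a : ℕ → ℕ} {C z : ℝ}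
    (ha : ∀ n, (a n : ℝ) ≤ C * 2 ^ n) (hz : |z| < 1 / 2) :
    Summable fun n => (a n : ℝ) * z ^ n := by
  refine Summable.of_norm_bounded
    ((summable_geometric_of_lt_one (abs_nonneg (2 * z))
      (by rw [abs_mul, abs_two]; linarith)).mul_left C) fun n => ?_
  rw [norm_mul, norm_pow, Real.norm_eq_abs, Real.norm_eq_abs, Nat.abs_cast, abs_mul, mul_pow,
    abs_two, ← mul_assoc]
  exact mul_le_mul_of_nonneg_right (ha n) (by positivity)

theorem HasSum.quartic_mul_eq_of_recurrence {a : ℕ → ℝ} {z S : ℝ}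
    (hS : HasSum (fun n => a n * z ^ n) S)
    (ha : ∀ n, a (n + 4) + a (n + 1) = 2 * a (n + 3) + a n) :
    (1 - 2 * z + z ^ 3 - z ^ 4) * S =
      a 0 + (a 1 - 2 * a 0) * z + (a 2 - 2 * a 1) * z ^ 2 + (a 3 - 2 * a 2 + a 0) * z ^ 3 := by
  have tail (k : ℕ) : HasSum (fun n => a (n + k) * z ^ (n + k)) (S - ∑ i ∈ range k, a i * z ^ i) :=
    (hasSum_nat_add_iff' k).mpr hS
  have hcomb := ((tail 4).add ((tail 1).mul_left (z ^ 3))).sub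
    (((tail 3).mul_left (2 * z)).add ((tail 0).mul_left (z ^ 4)))
  have hvanish : (fun n => a (n + 4) * z ^ (n + 4) + z ^ 3 * (a (n + 1) * z ^ (n + 1)) -
      (2 * z * (a (n + 3) * z ^ (n + 3)) + z ^ 4 * (a (n + 0) * z ^ (n + 0)))) = fun _ => 0 := by
    funext n
    linear_combination z ^ (n + 4) * ha n
  rw [hvanish] at hcomb
  have hzero := hcomb.unique hasSum_zero
  simp only [sum_range_succ, sum_range_zero] at hzero
  linear_combination hzero

inductive PrefixState
  | nil | one | oneOne | is110 | past110 | other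
  deriving DecidableEq

instance : Fintype PrefixState :=
  .ofList [.nil, .one, .oneOne, .is110, .past110, .other] (by rintro ⟨⟩ <;> simp)

namespace PrefixState

def next : PrefixState → Bool → PrefixState
  | nil, true => one
  | one, true => oneOne
  | oneOne, false => is110
  | is110, _ => past110
  | past110, _ => past110
  | _, _ => other

theorem foldl_next_past110 (w : List Bool) : w.foldl next past110 = past110 :=
  List.foldl_fixed' (fun _ => rfl) w

theorem foldl_next_other (w : List Bool) : w.foldl next other = other :=
  List.foldl_fixed' (fun _ => rfl) w

theorem foldl_next_eq_is110_iff (w : List Bool) :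
    w.foldl next nil = is110 ↔ w = [true, true, false] := by
  match w with
  | [] | [_] | [_, _] | [_, _, _] => decide +revert
  | a :: b :: c :: d :: w =>
    cases a <;> cases b <;> cases c <;> cases d <;>
      simp [next, foldl_next_past110, foldl_next_other]

theorem foldl_next_eq_past110_iff (w : List Bool) :
    w.foldl next nil = past110 ↔ [true, true, false] <+: w ∧ w ≠ [true, true, false] := by
  match w with
  | [] | [_] | [_, _] | [_, _, _] => decide +revert
  | a :: b :: c :: d :: w =>
    cases a <;> cases b <;> cases c <;> cases d <;>
      simp [next, foldl_next_past110, foldl_next_other]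

end PrefixState

inductive OccState
  | suffixNil | suffix0 | suffix01 | suffix011 | found | foundEarlier
  deriving DecidableEq

instance : Fintype OccState :=
  .ofList [.suffixNil, .suffix0, .suffix01, .suffix011, .found, .foundEarlier]
    (by rintro ⟨⟩ <;> simp)

namespace OccState

def next : OccState → Bool → OccState
  | suffixNil, true => suffixNil
  | suffix011, true => suffixNil
  | suffix01, true => suffix011
  | suffix0, true => suffix01
  | suffix011, false => found
  | found, _ => foundEarlier
  | foundEarlier, _ => foundEarlier
  | _, false => suffix0

def ofSuffix (w : List Bool) : OccState :=
  if [false, true, true, false] <:+ w then found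
  else if [false, true, true] <:+ w then suffix011
  else if [false, true] <:+ w then suffix01
  else if [false] <:+ w then suffix0
  else suffixNil

def ofWord (w : List Bool) : OccState :=
  if [false, true, true, false] <:+: w.dropLast then foundEarlier else ofSuffix w

theorem ofSuffix_concat {w : List Bool} (hw : ¬ [false, true, true, false] <:+ w) (b : Bool) :
    ofSuffix (w ++ [b]) = (ofSuffix w).next b := by
  obtain ⟨r, rfl⟩ : ∃ r, w = r.reverse := ⟨w.reverse, by simp⟩
  rw [← List.reverse_cons]
  simp only [ofSuffix, ← List.reverse_prefix, List.reverse_reverse, List.reverse_cons,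
    List.reverse_nil, List.nil_append, List.cons_append] at hw ⊢
  match r with
  | [] | [_] | [_, _] | [_, _, _] => decide +revert
  | a :: c :: d :: e :: r =>
    cases a <;> cases c <;> cases d <;> cases e <;> cases b <;> simp_all [next]

theorem ofWord_concat (w : List Bool) (b : Bool) : ofWord (w ++ [b]) = (ofWord w).next b := by
  rw [ofWord, List.dropLast_concat]
  by_cases hw : [false, true, true, false] <:+: w
  · rw [if_pos hw]
    obtain rfl | ⟨w', a, rfl⟩ := w.eq_nil_or_concat
    · simp at hw
    · simp only [List.concat_eq_append, List.infix_concat_iff] at hw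
      unfold ofWord ofSuffix
      split_ifs <;> simp_all [next]
  · have hd : ¬ [false, true, true, false] <:+: w.dropLast :=
      fun h => hw (h.trans w.dropLast_prefix.isInfix)
    rw [if_neg hw, ofWord, if_neg hd, ofSuffix_concat (fun h => hw h.isInfix)]

theorem foldl_next_eq_ofWord (w : List Bool) : w.foldl next suffixNil = ofWord w := by
  induction w using List.reverseRecOn with
  | nil => rfl
  | append_singleton w b ih => rw [List.foldl_append, ih, ofWord_concat]; rfl

theorem ofWord_eq_found_iff (w : List Bool) :
    ofWord w = found ↔
      [false, true, true, false] <:+ w ∧ ¬ [false, true, true, false] <:+: w.dropLast := by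
  unfold ofWord ofSuffix
  split_ifs <;> simp_all

end OccState

/-- `(is110, suffix0)` is the state reached on `110` itself. Accepting only this pair, rather
than every `(is110, _)`, makes the recurrence of `f2_recurrence` hold at every state, reachable
or not. -/
def d2DFA : DFA Bool (PrefixState × OccState) where
  step q b := (q.1.next b, q.2.next b)
  start := (.nil, .suffixNil)
  accept := {q | q = (.is110, .suffix0) ∨ (q.1 ≠ .past110 ∧ q.2 = .found)}

instance : DecidablePred (· ∈ d2DFA.accept) := fun q =>
  inferInstanceAs (Decidable (q = (.is110, .suffix0) ∨ (q.1 ≠ .past110 ∧ q.2 = .found)))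

theorem d2DFA_eval (w : List Bool) :
    d2DFA.eval w = (w.foldl PrefixState.next .nil, w.foldl OccState.next .suffixNil) := by
  suffices ∀ q : PrefixState × OccState,
      d2DFA.evalFrom q w = (w.foldl PrefixState.next q.1, w.foldl OccState.next q.2) from this _
  induction w with
  | nil => intro q; rfl
  | cons b w ih => intro q; exact ih _

theorem mem_D2_iff (w : List Bool) : w ∈ D2 ↔ d2DFA.eval w ∈ d2DFA.accept := by
  by_cases h110 : w = [true, true, false]
  · subst h110
    exact iff_of_true (Or.inl rfl) (by decide)
  rw [d2DFA_eval]
  simp only [d2DFA, D2, Set.mem_ofPred_eq, Prod.mk.injEq, ne_eq,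
    PrefixState.foldl_next_eq_is110_iff, PrefixState.foldl_next_eq_past110_iff,
    OccState.foldl_next_eq_ofWord, OccState.ofWord_eq_found_iff,
    List.forall_eq_append_append_imp_eq_nil_iff (List.cons_ne_nil _ _), h110]
  tauto

theorem f2_eq_countFrom (n : ℕ) : f2 n = d2DFA.countFrom d2DFA.start n := by
  simp only [f2, mem_D2_iff]
  exact d2DFA.ncard_evalFrom_mem_accept_length _ n

theorem f2_recurrence (n : ℕ) : f2 (n + 5) + f2 (n + 2) = 2 * f2 (n + 4) + f2 (n + 1) := by
  have h := d2DFA.countFrom_add_sum_eq_of_forall [5, 2] [4, 4, 1] (by decide) n d2DFA.start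
  simp only [List.map_cons, List.map_nil, List.sum_cons, List.sum_nil] at h
  simp only [f2_eq_countFrom]
  omega

theorem s2_succ (n : ℕ) : s2 (n + 1) = s2 n + f2 (n + 1) :=
  sum_Icc_succ_top (by omega) f2

theorem s2_initial : s2 0 = 0 ∧ s2 1 = 0 ∧ s2 2 = 0 ∧ s2 3 = 1 ∧ s2 4 = 2 := by
  simp only [s2, f2_eq_countFrom]
  decide

theorem s2_recurrence (n : ℕ) : s2 (n + 4) + s2 (n + 1) = 2 * s2 (n + 3) + s2 n := by
  induction n with
  | zero =>
    obtain ⟨h0, h1, -, h3, h4⟩ := s2_initial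
    show s2 4 + s2 1 = 2 * s2 3 + s2 0
    omega
  | succ n ih =>
    have h5 : s2 (n + 5) = s2 (n + 4) + f2 (n + 5) := s2_succ _
    have h4 : s2 (n + 4) = s2 (n + 3) + f2 (n + 4) := s2_succ _
    have h2 : s2 (n + 2) = s2 (n + 1) + f2 (n + 2) := s2_succ _
    have h1 : s2 (n + 1) = s2 n + f2 (n + 1) := s2_succ _
    have := f2_recurrence n
    show s2 (n + 5) + s2 (n + 2) = 2 * s2 (n + 4) + s2 (n + 1)
    omega

theorem s2_le_two_pow (n : ℕ) : s2 n ≤ 2 ^ (n + 1) := by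
  induction n with
  | zero => simp [s2]
  | succ n ih =>
    rw [s2_succ, f2_eq_countFrom, pow_succ]
    linarith [d2DFA.countFrom_le_two_pow d2DFA.start (n + 1), pow_succ 2 n]

/-- generating function of `D₂`: for every real `z` with
`|z| < 1/2`, the series `∑ s_n zⁿ` converges and
`(1 - 2z + z³ - z⁴) · ∑_{n=0}^∞ s_n zⁿ = z³`. -/
theorem d2_generating_function (z : ℝ) (hz : |z| < 1 / 2) :
    ∃ S : ℝ, HasSum (fun n : ℕ => (s2 n : ℝ) * z ^ n) S ∧
      (1 - 2 * z + z ^ 3 - z ^ 4) * S = z ^ 3 := by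
  have hsum : Summable fun n => (s2 n : ℝ) * z ^ n :=
    summable_natCast_mul_pow_of_le_two_pow (C := 2)
      (fun n => by exact_mod_cast (s2_le_two_pow n).trans_eq (pow_succ' 2 n)) hz
  refine ⟨_, hsum.hasSum, ?_⟩
  rw [hsum.hasSum.quartic_mul_eq_of_recurrence fun n => by exact_mod_cast s2_recurrence n]
  obtain ⟨h0, h1, h2, h3, -⟩ := s2_initial
  simp [h0, h1, h2, h3]
end
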